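/- Let w, m ≥ 1 and k ≥ 0 be integers with k < m, and let 0 < γ ≤ 1/9. Let A, B be w×w real matrices with ‖A‖ ≤ 1 and ‖B‖ ≤ 1 (ℓ∞ operator norm). Let X be a finite nonempty set, and for each 0 ≤ i ≤ k let Y_i be a finite nonempty set and 𝒜_i, ℬ_i : X × Y_i → ℝ^{w×w} be functions satisfying: (a) ‖𝒜_i(x,y)‖ ≤ C(m−1,i) and ‖ℬ_i(x,y)‖ ≤ C(m−1,i) for all x, y; (b) E_{x∈X}[‖E_{y∈Y_i}[𝒜_i(x,y)] − A‖] ≤ γ^{i+1} and E_{x∈X}[‖E_{y∈Y_i}[ℬ_i(x,y)] − B‖] ≤ γ^{i+1}. For each 0 ≤ i ≤ ⌈k/2⌉ let g_i : X × D_i → X × Y_i and h_i : X × D_i' → X × Y_i be (ε_i, δ)-averaging samplers (D_i, D_i' finite nonempty sets), where ε_i ≤ γ^{i+1}/(w·C(m−1,i)) and δ ≤ γ^{k+1}/(w²·C(2m−1,k)). For x ∈ X and 0 ≤ i ≤ k define A_{x,i} := E_{a∈D_i}[𝒜_i(g_i(x,a))] if i ≤ ⌈k/2⌉ and A_{x,i}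 := E_{y∈Y_i}[𝒜_i(x,y)] if i > ⌈k/2⌉; define B_{x,j} := E_{b∈D_j'}[ℬ_j(h_j(x,b))] if j ≤ ⌈k/2⌉ and B_{x,j} := E_{y∈Y_j}[ℬ_j(x,y)] if j > ⌈k/2⌉. Define C_k(x) := Σ_{i+j=k} A_{x,i}·B_{x,j} − Σ_{i+j=k−1} A_{x,i}·B_{x,j}. Then E_{x∈X}[‖C_k(x) − A·B‖] ≤ (33γ)^{k+1}. -/

import Mathlib

attribute [local instance] Matrix.linftyOpNormedRing

/-- The uniform average `E_{t∈T}[f t]` over a finite type `T`. -/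
noncomputable def expectation {T : Type*} [Fintype T] (f : T → ℝ) : ℝ :=
  (∑ t, f t) / (Fintype.card T : ℝ)

/-- The uniform average `⟨𝒜⟩ = E_{t∈T}[𝒜 t]` of a matrix-valued function. -/
noncomputable def mexpect {T : Type*} [Fintype T] {w : ℕ}
    (A : T → Matrix (Fin w) (Fin w) ℝ) : Matrix (Fin w) (Fin w) ℝ :=
  (Fintype.card T : ℝ)⁻¹ • ∑ t, A t

/-- The weight `μ(𝒜) = max_{t∈T} ‖𝒜 t‖` (ℓ∞ operator norm). -/
noncomputable def weight {T : Type*} [Fintype T] [Nonempty T] {w : ℕ}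
    (A : T → Matrix (Fin w) (Fin w) ℝ) : ℝ :=
  Finset.univ.sup' Finset.univ_nonempty (fun t => ‖A t‖)

/-- `g : X × S → T` is an `(ε,δ)`-averaging sampler. -/
def IsAvgSampler {X S T : Type*} [Fintype X] [Fintype S] [Fintype T]
    (ε δ : ℝ) (g : X → S → T) : Prop :=
  ∀ f : T → ℝ, (∀ t, f t ∈ Set.Icc (0 : ℝ) 1) →
    (1 - δ) * (Fintype.card X : ℝ) ≤
      ((Finset.univ.filter fun x : X =>
        |expectation (fun s => f (g x s)) - expectation f| ≤ ε).card : ℝ)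

/-!
Centering at `A` and `B`, the combination `C_k(x) - A * B` equals
`A (B_{x,k} - B) + (A_{x,k} - A) B` plus the convolution sums of the error products
`(A_{x,i} - A)(B_{x,j} - B)` over `i + j = k` and `i + j = k - 1`.

Each mean error `E_x ‖A_{x,i} - A‖` is at most `5 γ^(i+1)`: for `i > ⌈k/2⌉` by assumption, and
for `i ≤ ⌈k/2⌉` because, outside a set of density `w² δ` (a union bound over the `w²` entries),
the sampler estimates the mean of `𝒜_i` entrywise, hence within `2 γ^(i+1)` in norm, while that
mean is `γ^(i+1)`-close to `A`. In every product one index is at most `⌈k/2⌉`, so one factor is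
`3 γ^(i+1)`-small off the sparse set, on which both factors are bounded by binomial coefficients
whose product is at most `C(2m-1, k)` by Vandermonde. Each product thus contributes at most
`19 γ^(k+1)`, for a total of `(38 k + 29) γ^(k+1) ≤ (33 γ)^(k+1)`.
-/

open Finset
attribute [local instance] Matrix.linftyOpNormSMulClass

section Expectation

variable {T : Type*} [Fintype T]

lemma expectation_mono {f g : T → ℝ} (h : ∀ t, f t ≤ g t) : expectation f ≤ expectation g :=
  div_le_div_of_nonneg_right (sum_le_sum fun t _ => h t) (Nat.cast_nonneg _)

lemma expectation_nonneg {f : T → ℝ} (h : ∀ t, 0 ≤ f t) : 0 ≤ expectation f :=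
  div_nonneg (sum_nonneg fun t _ => h t) (Nat.cast_nonneg _)

lemma expectation_add (f g : T → ℝ) :
    expectation (fun t => f t + g t) = expectation f + expectation g := by
  simp only [expectation, sum_add_distrib, add_div]

lemma expectation_sum {ι : Type*} (s : Finset ι) (f : ι → T → ℝ) :
    expectation (fun t => ∑ i ∈ s, f i t) = ∑ i ∈ s, expectation (f i) := by
  simp only [expectation, sum_div]
  exact sum_comm

lemma expectation_mul_add [Nonempty T] (f : T → ℝ) (a b : ℝ) :
    expectation (fun t => a * f t + b) = a * expectation f + b := by
  have hT : (Fintype.card T : ℝ) ≠ 0 := by positivity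
  simp only [expectation, sum_add_distrib, ← mul_sum, sum_const, card_univ, nsmul_eq_mul]
  field_simp

lemma expectation_const [Nonempty T] (c : ℝ) : expectation (fun _ : T => c) = c := by
  simpa using expectation_mul_add (fun _ : T => (0 : ℝ)) 0 c

variable {w : ℕ}

lemma mexpect_apply (f : T → Matrix (Fin w) (Fin w) ℝ) (p q : Fin w) :
    mexpect f p q = expectation (fun t => f t p q) := by
  simp [mexpect, expectation, Matrix.sum_apply, div_eq_inv_mul]

lemma mexpect_const [Nonempty T] (M : Matrix (Fin w) (Fin w) ℝ) :
    mexpect (fun _ : T => M) = M := by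
  ext p q
  rw [mexpect_apply, expectation_const]

lemma mexpect_sub (f g : T → Matrix (Fin w) (Fin w) ℝ) :
    mexpect (fun t => f t - g t) = mexpect f - mexpect g := by
  simp only [mexpect, sum_sub_distrib, smul_sub]

lemma mexpect_prod {X Y : Type*} [Fintype X] [Fintype Y] (F : X × Y → Matrix (Fin w) (Fin w) ℝ) :
    mexpect F = mexpect (fun x => mexpect (fun y => F (x, y))) := by
  simp only [mexpect, Fintype.card_prod, Fintype.sum_prod_type, smul_sum, Nat.cast_mul,
    mul_inv, mul_smul]

lemma norm_mexpect_le (f : T → Matrix (Fin w) (Fin w) ℝ) :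
    ‖mexpect f‖ ≤ expectation (fun t => ‖f t‖) := by
  rw [mexpect, expectation, norm_smul, div_eq_inv_mul, norm_inv, Real.norm_natCast]
  gcongr
  exact norm_sum_le _ _

lemma norm_mexpect_le_of_le [Nonempty T] {f : T → Matrix (Fin w) (Fin w) ℝ} {C : ℝ}
    (h : ∀ t, ‖f t‖ ≤ C) : ‖mexpect f‖ ≤ C :=
  (norm_mexpect_le f).trans <| (expectation_mono h).trans_eq (expectation_const C)

lemma norm_mexpect_sub_le [Nonempty T] (f : T → Matrix (Fin w) (Fin w) ℝ)
    (M : Matrix (Fin w) (Fin w) ℝ) : ‖mexpect f - M‖ ≤ expectation (fun t => ‖f t - M‖) := by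
  simpa only [mexpect_sub, mexpect_const] using norm_mexpect_le (fun t => f t - M)

end Expectation

section MatrixNorm

variable {n α : Type*} [Fintype n] [DecidableEq n] [NormedRing α]

lemma Matrix.norm_apply_le_linfty_opNorm (M : Matrix n n α) (i j : n) : ‖M i j‖ ≤ ‖M‖ := by
  change ‖M i j‖ ≤ ‖fun i => WithLp.toLp 1 (M i)‖
  refine le_trans ?_ (norm_le_pi_norm (fun i => WithLp.toLp 1 (M i)) i)
  rw [PiLp.norm_eq_of_L1]
  exact single_le_sum (f := fun j => ‖M i j‖) (fun _ _ => norm_nonneg _) (mem_univ j)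

lemma Matrix.linfty_opNorm_le_of_norm_apply_le {M : Matrix n n α} {c : ℝ}
    (h : ∀ i j, ‖M i j‖ ≤ c) : ‖M‖ ≤ Fintype.card n * c := by
  rcases isEmpty_or_nonempty n with _ | ⟨⟨i⟩⟩
  · simp [Subsingleton.elim M 0]
  have hc : 0 ≤ c := (norm_nonneg _).trans (h i i)
  change ‖fun i => WithLp.toLp 1 (M i)‖ ≤ _
  refine (pi_norm_le_iff_of_nonneg (by positivity)).2 fun i => ?_
  rw [PiLp.norm_eq_of_L1]
  simpa using sum_le_card_nsmul univ _ c fun j _ => h i j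

end MatrixNorm

section Density

variable {X : Type*} [Fintype X]

def MostlyLE (η : ℝ) (u : X → ℝ) (s : ℝ) : Prop :=
  ∃ G : Finset X, (1 - η) * Fintype.card X ≤ #G ∧ ∀ x ∈ G, u x ≤ s

lemma le_card_inf_of_forall_le_card [DecidableEq X] {ι : Type*} [Fintype ι] {δ : ℝ}
    (G : ι → Finset X) (h : ∀ i, (1 - δ) * Fintype.card X ≤ #(G i)) :
    (1 - Fintype.card ι * δ) * Fintype.card X ≤ #(univ.inf G) := by
  have hcompl : ∀ s : Finset X, (#sᶜ : ℝ) = Fintype.card X - #s := fun s => by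
    rw [card_compl, Nat.cast_sub (card_le_univ s)]
  have hunion : (#(univ.inf G)ᶜ : ℝ) ≤ ∑ i, (#(G i)ᶜ : ℝ) := by
    rw [Finset.compl_inf, sup_eq_biUnion]
    exact_mod_cast card_biUnion_le
  have hsum : ∑ i, (#(G i)ᶜ : ℝ) ≤ Fintype.card ι * (δ * Fintype.card X) := by
    simpa using sum_le_card_nsmul univ (fun i => (#(G i)ᶜ : ℝ)) (δ * Fintype.card X)
      fun i _ => by linarith [hcompl (G i), h i]
  linarith [hcompl (univ.inf G)]

variable [Nonempty X]

lemma expectation_mul_le_of_mostlyLE {u v : X → ℝ} {U V s t η : ℝ} (hu : MostlyLE η u s)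
    (hu0 : ∀ x, 0 ≤ u x) (hv0 : ∀ x, 0 ≤ v x) (hU : ∀ x, u x ≤ U) (hV : ∀ x, v x ≤ V)
    (hs : 0 ≤ s) (hv : expectation v ≤ t) :
    expectation (fun x => u x * v x) ≤ s * t + η * (U * V) := by
  classical
  obtain ⟨G, hG, hGs⟩ := hu
  obtain ⟨x₀⟩ := ‹Nonempty X›
  have hUV : 0 ≤ U * V := mul_nonneg ((hu0 x₀).trans (hU x₀)) ((hv0 x₀).trans (hV x₀))
  have hN : (0 : ℝ) < Fintype.card X := by positivity
  have hgood : ∑ x ∈ G, u x * v x ≤ s * ∑ x, v x := by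
    rw [mul_sum]
    exact (sum_le_sum fun x hx => mul_le_mul_of_nonneg_right (hGs x hx) (hv0 x)).trans
      (sum_le_sum_of_subset_of_nonneg (subset_univ G) fun x _ _ => mul_nonneg hs (hv0 x))
  have hbad : ∑ x ∈ Gᶜ, u x * v x ≤ η * Fintype.card X * (U * V) := by
    have hcard : (#Gᶜ : ℝ) ≤ η * Fintype.card X := by
      rw [card_compl, Nat.cast_sub (card_le_univ G)]
      linarith
    calc ∑ x ∈ Gᶜ, u x * v x ≤ #Gᶜ * (U * V) := by
          simpa using sum_le_card_nsmul _ _ _ fun x _ => mul_le_mul (hU x) (hV x) (hv0 x)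
            ((hu0 x).trans (hU x))
      _ ≤ η * Fintype.card X * (U * V) := by gcongr
  have hv' : ∑ x, v x ≤ t * Fintype.card X := (div_le_iff₀ hN).1 hv
  rw [expectation, div_le_iff₀ hN, ← sum_add_sum_compl G]
  nlinarith

lemma expectation_le_of_mostlyLE {u : X → ℝ} {U s η : ℝ} (hu : MostlyLE η u s)
    (hu0 : ∀ x, 0 ≤ u x) (hU : ∀ x, u x ≤ U) (hs : 0 ≤ s) :
    expectation u ≤ s + η * U := by
  simpa using expectation_mul_le_of_mostlyLE hu hu0 (fun _ => zero_le_one) hU (fun _ => le_rfl)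
    hs (expectation_const 1).le

lemma expectation_mul_le_of_mostlyLE_or {u v : X → ℝ} {U V a b s t η : ℝ}
    (hu0 : ∀ x, 0 ≤ u x) (hv0 : ∀ x, 0 ≤ v x) (hU : ∀ x, u x ≤ U) (hV : ∀ x, v x ≤ V)
    (hs : 0 ≤ s) (ha : 0 ≤ a) (hb : 0 ≤ b) (hu : expectation u ≤ t * a)
    (hv : expectation v ≤ t * b) (h : MostlyLE η u (s * a) ∨ MostlyLE η v (s * b)) :
    expectation (fun x => u x * v x) ≤ s * t * (a * b) + η * (U * V) := by
  rcases h with h | h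
  · linarith [expectation_mul_le_of_mostlyLE h hu0 hv0 hU hV (by positivity) hv]
  · have := expectation_mul_le_of_mostlyLE h hv0 hu0 hV hU (by positivity) hu
    simp only [mul_comm (v _)] at this
    linarith

end Density

section Sampler

variable {X S T : Type*} [Fintype X] [Fintype S] [Nonempty S] [Fintype T] [Nonempty T]
  {ε δ : ℝ} {g : X → S → T}

lemma IsAvgSampler.mostlyLE_abs_sub (hg : IsAvgSampler ε δ g) {C : ℝ} (hC : 0 < C)
    (f : T → ℝ) (hf : ∀ t, |f t| ≤ C) :
    MostlyLE δ (fun x => |expectation (fun s => f (g x s)) - expectation f|) (2 * C * ε) := by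
  set a := (2 * C)⁻¹ with ha_def
  have ha : 0 < a := by positivity
  have hrescale : ∀ t, |a * f t| ≤ 1 / 2 := fun t => by
    rw [abs_mul, abs_of_pos ha]
    calc a * |f t| ≤ a * C := by gcongr; exact hf t
      _ = 1 / 2 := by rw [ha_def]; field_simp
  refine ⟨_, hg (fun t => a * f t + 1 / 2) fun t => ?_, fun x hx => ?_⟩
  · have := abs_le.1 (hrescale t)
    constructor <;> linarith
  · simp only [mem_filter, mem_univ, true_and, expectation_mul_add, add_sub_add_right_eq_sub,
      ← mul_sub, abs_mul, abs_of_pos ha] at hx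
    calc _ = 2 * C * (a * |expectation (fun s => f (g x s)) - expectation f|) := by
          rw [ha_def]; field_simp
      _ ≤ 2 * C * ε := by gcongr

lemma IsAvgSampler.mostlyLE_norm_mexpect_sub {w : ℕ} (hg : IsAvgSampler ε δ g) {C : ℝ}
    (hC : 0 < C) (F : T → Matrix (Fin w) (Fin w) ℝ) (hF : ∀ t, ‖F t‖ ≤ C) :
    MostlyLE (w ^ 2 * δ) (fun x => ‖mexpect (fun s => F (g x s)) - mexpect F‖)
      (w * (2 * C * ε)) := by
  classical
  choose G hG hGs using fun pq : Fin w × Fin w =>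
    hg.mostlyLE_abs_sub hC (fun t => F t pq.1 pq.2) fun t => by
      simpa only [Real.norm_eq_abs] using (Matrix.norm_apply_le_linfty_opNorm _ _ _).trans (hF t)
  refine ⟨univ.inf G, by simpa [sq] using le_card_inf_of_forall_le_card G hG, fun x hx => ?_⟩
  refine (Matrix.linfty_opNorm_le_of_norm_apply_le (c := 2 * C * ε)
    (M := mexpect (fun s => F (g x s)) - mexpect F) fun p q => ?_).trans_eq (by simp)
  rw [Matrix.sub_apply, mexpect_apply, mexpect_apply, Real.norm_eq_abs]
  exact hGs (p, q) x (mem_inf.1 hx (p, q) (mem_univ _))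

end Sampler

lemma estimator_error_bounds {X Y D : Type*} [Fintype X] [Nonempty X] [Fintype Y] [Nonempty Y]
    [Fintype D] [Nonempty D] {w : ℕ} {A : Matrix (Fin w) (Fin w) ℝ} (hA : ‖A‖ ≤ 1)
    {F : X × Y → Matrix (Fin w) (Fin w) ℝ} {C β : ℝ} (hC : 1 ≤ C) (hF : ∀ p, ‖F p‖ ≤ C)
    (hβ : expectation (fun x => ‖mexpect (fun y => F (x, y)) - A‖) ≤ β)
    {sampled : Prop} [Decidable sampled] {ε δ : ℝ} {g : X → D → X × Y}
    (hg : sampled → IsAvgSampler ε δ g) (hε : sampled → ε * (w * C) ≤ β)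
    (hδ : w ^ 2 * δ * C ≤ β) {Â : X → Matrix (Fin w) (Fin w) ℝ}
    (hÂ : ∀ x, Â x =
      if sampled then mexpect (fun a => F (g x a)) else mexpect (fun y => F (x, y))) :
    (∀ x, ‖Â x - A‖ ≤ 2 * C) ∧
      (sampled → MostlyLE (w ^ 2 * δ) (fun x => ‖Â x - A‖) (3 * β)) ∧
      expectation (fun x => ‖Â x - A‖) ≤ 5 * β := by
  have hbound : ∀ x, ‖Â x - A‖ ≤ 2 * C := fun x => by
    have : ‖Â x‖ ≤ C := by
      rw [hÂ x]
      split_ifs <;> exact norm_mexpect_le_of_le fun _ => hF _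
    linarith [norm_sub_le (Â x) A]
  have hβ0 : 0 ≤ β := (expectation_nonneg fun _ => norm_nonneg _).trans hβ
  have hgood : sampled → MostlyLE (w ^ 2 * δ) (fun x => ‖Â x - A‖) (3 * β) := fun hs => by
    have hbias : ‖mexpect F - A‖ ≤ β := by
      rw [mexpect_prod]
      exact (norm_mexpect_sub_le _ _).trans hβ
    obtain ⟨G, hG, hGs⟩ := (hg hs).mostlyLE_norm_mexpect_sub (by linarith) F hF
    refine ⟨G, hG, fun x hx => ?_⟩
    have hsample : ‖mexpect (fun a => F (g x a)) - mexpect F‖ ≤ w * (2 * C * ε) := hGs x hx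
    show ‖Â x - A‖ ≤ 3 * β
    rw [hÂ x, if_pos hs]
    linarith [norm_sub_le_norm_sub_add_norm_sub (mexpect fun a => F (g x a)) (mexpect F) A, hε hs]
  refine ⟨hbound, hgood, ?_⟩
  by_cases hs : sampled
  · linarith [expectation_le_of_mostlyLE (hgood hs) (fun _ => norm_nonneg _) hbound (by linarith)]
  · simp only [hÂ, if_neg hs]
    linarith

lemma Nat.choose_le_choose_of_le_of_le_half {n r s : ℕ} (hrs : r ≤ s) (hs : s ≤ n / 2) :
    n.choose r ≤ n.choose s := by
  induction s, hrs using Nat.le_induction with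
  | base => rfl
  | succ s _ ih => exact (ih (by omega)).trans (Nat.choose_le_succ_of_lt_half_left (by omega))

lemma Nat.choose_mul_choose_le_add_choose (m n i j : ℕ) :
    m.choose i * n.choose j ≤ (m + n).choose (i + j) := by
  rw [Nat.add_choose_eq]
  exact single_le_sum (f := fun p : ℕ × ℕ => m.choose p.1 * n.choose p.2)
    (fun _ _ => Nat.zero_le _) (mem_antidiagonal.2 rfl : (i, j) ∈ antidiagonal (i + j))

lemma Nat.choose_mul_choose_le_choose_of_lt {m i j k : ℕ} (hij : i + j ≤ k) (hk : k < m) :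
    (m - 1).choose i * (m - 1).choose j ≤ (2 * m - 1).choose k :=
  (Nat.choose_mul_choose_le_add_choose (m - 1) (m - 1) i j).trans <|
    (Nat.choose_le_choose (i + j) (by omega)).trans <|
      Nat.choose_le_choose_of_le_of_le_half hij (by omega)

lemma mul_mul_le_of_le_div_mul {a b c K δ : ℝ} (ha : 0 ≤ a) (hb : 0 ≤ b) (hc : 0 ≤ c)
    (hcK : c ≤ K) (h : δ ≤ a / (b * K)) : b * δ * c ≤ a := by
  have := mul_le_of_le_div₀ ha (mul_nonneg hb (hc.trans hcK)) h
  rcases le_total 0 δ with hδ | hδ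
  · nlinarith [mul_nonneg (mul_nonneg hb hδ) (sub_nonneg.2 hcK)]
  · nlinarith [mul_nonpos_of_nonpos_of_nonneg (mul_nonpos_of_nonneg_of_nonpos hb hδ) hc]

lemma error_sum_le_pow (k : ℕ) {γ : ℝ} (hγ : 0 ≤ γ) :
    2 * (5 * γ ^ (k + 1)) + (2 * k + 1) * (19 * γ ^ (k + 1)) ≤ (33 * γ) ^ (k + 1) := by
  have hbernoulli := one_add_mul_le_pow (by norm_num : (-2 : ℝ) ≤ 32) k
  norm_num at hbernoulli
  rw [mul_pow]
  have : (38 * k + 29 : ℝ) ≤ 33 ^ (k + 1) := by rw [pow_succ]; nlinarith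
  nlinarith [pow_nonneg hγ (k + 1)]

section Convolution

variable {R : Type*}

lemma convolution_sub_mul_eq [Ring R] (a b : ℕ → R) (A B : R) (k : ℕ) :
    (∑ i ∈ range (k + 1), a i * b (k - i)) - (∑ i ∈ range k, a i * b (k - 1 - i)) - A * B =
      A * (b k - B) + (a k - A) * B + (∑ i ∈ range (k + 1), (a i - A) * (b (k - i) - B)) -
        ∑ i ∈ range k, (a i - A) * (b (k - 1 - i) - B) := by
  have expand : ∀ (n : ℕ) (f : ℕ → ℕ), ∑ i ∈ range n, (a i - A) * (b (f i) - B) =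
      (∑ i ∈ range n, a i * b (f i)) - (∑ i ∈ range n, a i) * B -
        A * (∑ i ∈ range n, b (f i)) + n • (A * B) := fun n f => by
    simp only [sub_mul, mul_sub, sum_sub_distrib, ← sum_mul, ← mul_sum, sum_const, card_range,
      smul_mul_assoc]
    abel
  have reflect : ∑ i ∈ range (k + 1), b (k - i) = ∑ i ∈ range (k + 1), b i := by
    simpa using sum_range_reflect b (k + 1)
  rw [expand, expand, reflect, sum_range_reflect b k, sum_range_succ a, sum_range_succ b]
  simp only [mul_add, add_mul, mul_sub, sub_mul, succ_nsmul]
  abel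

lemma norm_convolution_sub_mul_le [NormedRing R] {A B : R} (hA : ‖A‖ ≤ 1) (hB : ‖B‖ ≤ 1)
    (a b : ℕ → R) (k : ℕ) :
    ‖(∑ i ∈ range (k + 1), a i * b (k - i)) - (∑ i ∈ range k, a i * b (k - 1 - i)) - A * B‖ ≤
      ‖a k - A‖ + ‖b k - B‖ + ((∑ i ∈ range (k + 1), ‖a i - A‖ * ‖b (k - i) - B‖) +
        ∑ i ∈ range k, ‖a i - A‖ * ‖b (k - 1 - i) - B‖) := by
  have hsum : ∀ (n : ℕ) (f : ℕ → ℕ), ‖∑ i ∈ range n, (a i - A) * (b (f i) - B)‖ ≤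
      ∑ i ∈ range n, ‖a i - A‖ * ‖b (f i) - B‖ :=
    fun n f => (norm_sum_le _ _).trans (sum_le_sum fun i _ => norm_mul_le _ _)
  have hAb : ‖A * (b k - B)‖ ≤ ‖b k - B‖ :=
    (norm_mul_le _ _).trans (mul_le_of_le_one_left (norm_nonneg _) hA)
  have haB : ‖(a k - A) * B‖ ≤ ‖a k - A‖ :=
    (norm_mul_le _ _).trans (mul_le_of_le_one_right (norm_nonneg _) hB)
  rw [convolution_sub_mul_eq]
  refine (norm_sub_le _ _).trans ?_
  linarith [norm_add₃_le (a := A * (b k - B)) (b := (a k - A) * B)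
    (c := ∑ i ∈ range (k + 1), (a i - A) * (b (k - i) - B)), hsum (k + 1) (k - ·),
    hsum k (k - 1 - ·)]

lemma expectation_norm_convolution_sub_mul_le {X : Type*} [Fintype X] [NormedRing R] {A B : R}
    (hA : ‖A‖ ≤ 1) (hB : ‖B‖ ≤ 1) (a b : ℕ → X → R) (k : ℕ) {c d : ℝ}
    (ha : expectation (fun x => ‖a k x - A‖) ≤ c) (hb : expectation (fun x => ‖b k x - B‖) ≤ c)
    (hab : ∀ i j, i + j ≤ k → k ≤ i + j + 1 →
      expectation (fun x => ‖a i x - A‖ * ‖b j x - B‖) ≤ d) :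
    expectation (fun x => ‖(∑ i ∈ range (k + 1), a i x * b (k - i) x) -
        (∑ i ∈ range k, a i x * b (k - 1 - i) x) - A * B‖) ≤ 2 * c + (2 * k + 1) * d := by
  refine (expectation_mono fun x => norm_convolution_sub_mul_le hA hB (a · x) (b · x) k).trans ?_
  simp only [expectation_add, expectation_sum]
  have hk : ∑ i ∈ range (k + 1), expectation (fun x => ‖a i x - A‖ * ‖b (k - i) x - B‖) ≤
      (k + 1) * d := by
    simpa using sum_le_card_nsmul (range (k + 1)) _ d fun i hi => by
      have := mem_range.1 hi
      exact hab i (k - i) (by omega) (by omega)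
  have hk' : ∑ i ∈ range k, expectation (fun x => ‖a i x - A‖ * ‖b (k - 1 - i) x - B‖) ≤
      k * d := by
    simpa using sum_le_card_nsmul (range k) _ d fun i hi => by
      have := mem_range.1 hi
      exact hab i (k - 1 - i) (by omega) (by omega)
  linarith

end Convolution

theorem stmt_11_general (w m k : ℕ) (hk : k < m)
    (γ : ℝ) (hγ0 : 0 < γ) (hγ1 : γ ≤ 1 / 9)
    (A B : Matrix (Fin w) (Fin w) ℝ) (hA : ‖A‖ ≤ 1) (hB : ‖B‖ ≤ 1)
    (X : Type) [Fintype X] [Nonempty X]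
    (Y D D' : ℕ → Type)
    [∀ i, Fintype (Y i)] [∀ i, Nonempty (Y i)]
    [∀ i, Fintype (D i)] [∀ i, Nonempty (D i)]
    [∀ i, Fintype (D' i)] [∀ i, Nonempty (D' i)]
    (𝒜 ℬ : ∀ i : ℕ, X × Y i → Matrix (Fin w) (Fin w) ℝ)
    (hbdA : ∀ i ≤ k, ∀ p, ‖𝒜 i p‖ ≤ ((m - 1).choose i : ℝ))
    (hbdB : ∀ i ≤ k, ∀ p, ‖ℬ i p‖ ≤ ((m - 1).choose i : ℝ))
    (happroxA : ∀ i ≤ k,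
      expectation (fun x : X => ‖mexpect (fun y : Y i => 𝒜 i (x, y)) - A‖) ≤ γ ^ (i + 1))
    (happroxB : ∀ i ≤ k,
      expectation (fun x : X => ‖mexpect (fun y : Y i => ℬ i (x, y)) - B‖) ≤ γ ^ (i + 1))
    (ε : ℕ → ℝ) (δ : ℝ)
    (g : ∀ i : ℕ, X → D i → X × Y i) (h : ∀ i : ℕ, X → D' i → X × Y i)
    (hg : ∀ i ≤ (k + 1) / 2, IsAvgSampler (ε i) δ (g i))
    (hh : ∀ i ≤ (k + 1) / 2, IsAvgSampler (ε i) δ (h i))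
    (hε : ∀ i ≤ (k + 1) / 2, ε i ≤ γ ^ (i + 1) / (w * ((m - 1).choose i : ℝ)))
    (hδ : δ ≤ γ ^ (k + 1) / (w ^ 2 * ((2 * m - 1).choose k : ℝ)))
    (AA BB : ℕ → X → Matrix (Fin w) (Fin w) ℝ)
    (hAA : ∀ i ≤ k, ∀ x : X, AA i x =
      if i ≤ (k + 1) / 2 then mexpect (fun a : D i => 𝒜 i (g i x a))
      else mexpect (fun y : Y i => 𝒜 i (x, y)))
    (hBB : ∀ j ≤ k, ∀ x : X, BB j x =
      if j ≤ (k + 1) / 2 then mexpect (fun b : D' j => ℬ j (h j x b))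
      else mexpect (fun y : Y j => ℬ j (x, y))) :
    expectation (fun x : X =>
        ‖(∑ i ∈ Finset.range (k + 1), AA i x * BB (k - i) x)
            - (∑ i ∈ Finset.range k, AA i x * BB (k - 1 - i) x) - A * B‖)
      ≤ (33 * γ) ^ (k + 1) := by
  have hγ : γ ≤ 1 := hγ1.trans (by norm_num)
  have hC1 : ∀ i ≤ k, (1 : ℝ) ≤ (m - 1).choose i := fun i hi => by
    exact_mod_cast Nat.choose_pos (by omega)
  have hδK : ∀ i j, i + j ≤ k →
      (w : ℝ) ^ 2 * δ * ((m - 1).choose i * (m - 1).choose j) ≤ γ ^ (k + 1) := fun i j hij =>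
    mul_mul_le_of_le_div_mul (by positivity) (by positivity) (by positivity)
      (by exact_mod_cast Nat.choose_mul_choose_le_choose_of_lt hij hk) hδ
  have hδC : ∀ i ≤ k, (w : ℝ) ^ 2 * δ * (m - 1).choose i ≤ γ ^ (i + 1) := fun i hi => by
    have := hδK i 0 (by omega)
    rw [Nat.choose_zero_right, Nat.cast_one, mul_one] at this
    exact this.trans (pow_le_pow_of_le_one hγ0.le hγ (by omega))
  have errA := fun i (hi : i ≤ k) => estimator_error_bounds hA (hC1 i hi) (hbdA i hi)
    (happroxA i hi) (hg i) (fun h => mul_le_of_le_div₀ (by positivity) (by positivity) (hε i h))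
    (hδC i hi) (hAA i hi)
  have errB := fun j (hj : j ≤ k) => estimator_error_bounds hB (hC1 j hj) (hbdB j hj)
    (happroxB j hj) (hh j) (fun h => mul_le_of_le_div₀ (by positivity) (by positivity) (hε j h))
    (hδC j hj) (hBB j hj)
  refine (expectation_norm_convolution_sub_mul_le hA hB AA BB k (errA k le_rfl).2.2
    (errB k le_rfl).2.2 fun i j hij hk' => ?_).trans (error_sum_le_pow k hγ0.le)
  obtain ⟨hUA, hGA, hEA⟩ := errA i (by omega)
  obtain ⟨hUB, hGB, hEB⟩ := errB j (by omega)
  have hgood : MostlyLE ((w : ℝ) ^ 2 * δ) (fun x => ‖AA i x - A‖) (3 * γ ^ (i + 1)) ∨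
      MostlyLE ((w : ℝ) ^ 2 * δ) (fun x => ‖BB j x - B‖) (3 * γ ^ (j + 1)) := by
    rcases (by omega : i ≤ (k + 1) / 2 ∨ j ≤ (k + 1) / 2) with hi | hj
    exacts [Or.inl (hGA hi), Or.inr (hGB hj)]
  have hγij : γ ^ (i + 1) * γ ^ (j + 1) ≤ γ ^ (k + 1) := by
    rw [← pow_add]
    exact pow_le_pow_of_le_one hγ0.le hγ (by omega)
  linarith [expectation_mul_le_of_mostlyLE_or (fun _ => norm_nonneg _) (fun _ => norm_nonneg _)
    hUA hUB (by norm_num) (by positivity) (by positivity) hEA hEB hgood, hδK i j hij]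

/-- **core error bound of the main recursive construction.**
Given `γ^(i+1)`-robust approximators `𝒜_i, ℬ_i` (with indexed inner parts `Y i`) of the
two halves `A, B`, norm-bounded by `C(m−1,i)`, and `(ε_i,δ)`-samplers `g_i, h_i` for
`i ≤ ⌈k/2⌉` with `ε_i ≤ γ^(i+1)/(w·C(m−1,i))` and `δ ≤ γ^(k+1)/(w²·C(2m−1,k))`,
the combination `C_k(x) = Σ_{i+j=k} A_{x,i}B_{x,j} − Σ_{i+j=k−1} A_{x,i}B_{x,j}`
(where `A_{x,i}`, `B_{x,j}` are sampled averages for small `i` and conditional averages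
for large `i`) satisfies `E_x ‖C_k(x) − A·B‖ ≤ (33γ)^(k+1)`.
Here `⌈k/2⌉ = (k+1)/2` in natural-number arithmetic. -/
theorem stmt_11 (w m k : ℕ) (hw : 1 ≤ w) (hm : 1 ≤ m) (hk : k < m)
    (γ : ℝ) (hγ0 : 0 < γ) (hγ1 : γ ≤ 1 / 9)
    (A B : Matrix (Fin w) (Fin w) ℝ) (hA : ‖A‖ ≤ 1) (hB : ‖B‖ ≤ 1)
    (X : Type) [Fintype X] [Nonempty X]
    (Y D D' : ℕ → Type)
    [∀ i, Fintype (Y i)] [∀ i, Nonempty (Y i)]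
    [∀ i, Fintype (D i)] [∀ i, Nonempty (D i)]
    [∀ i, Fintype (D' i)] [∀ i, Nonempty (D' i)]
    (𝒜 ℬ : ∀ i : ℕ, X × Y i → Matrix (Fin w) (Fin w) ℝ)
    (hbdA : ∀ i ≤ k, ∀ p, ‖𝒜 i p‖ ≤ ((m - 1).choose i : ℝ))
    (hbdB : ∀ i ≤ k, ∀ p, ‖ℬ i p‖ ≤ ((m - 1).choose i : ℝ))
    (happroxA : ∀ i ≤ k,
      expectation (fun x : X => ‖mexpect (fun y : Y i => 𝒜 i (x, y)) - A‖) ≤ γ ^ (i + 1))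
    (happroxB : ∀ i ≤ k,
      expectation (fun x : X => ‖mexpect (fun y : Y i => ℬ i (x, y)) - B‖) ≤ γ ^ (i + 1))
    (ε : ℕ → ℝ) (δ : ℝ)
    (g : ∀ i : ℕ, X → D i → X × Y i) (h : ∀ i : ℕ, X → D' i → X × Y i)
    (hg : ∀ i ≤ (k + 1) / 2, IsAvgSampler (ε i) δ (g i))
    (hh : ∀ i ≤ (k + 1) / 2, IsAvgSampler (ε i) δ (h i))
    (hε : ∀ i ≤ (k + 1) / 2, ε i ≤ γ ^ (i + 1) / (w * ((m - 1).choose i : ℝ)))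
    (hδ : δ ≤ γ ^ (k + 1) / (w ^ 2 * ((2 * m - 1).choose k : ℝ)))
    (AA BB : ℕ → X → Matrix (Fin w) (Fin w) ℝ)
    (hAA : ∀ i ≤ k, ∀ x : X, AA i x =
      if i ≤ (k + 1) / 2 then mexpect (fun a : D i => 𝒜 i (g i x a))
      else mexpect (fun y : Y i => 𝒜 i (x, y)))
    (hBB : ∀ j ≤ k, ∀ x : X, BB j x =
      if j ≤ (k + 1) / 2 then mexpect (fun b : D' j => ℬ j (h j x b))
      else mexpect (fun y : Y j => ℬ j (x, y))) :
    expectation (fun x : X =>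
        ‖(∑ i ∈ Finset.range (k + 1), AA i x * BB (k - i) x)
            - (∑ i ∈ Finset.range k, AA i x * BB (k - 1 - i) x) - A * B‖)
      ≤ (33 * γ) ^ (k + 1) :=
  stmt_11_general w m k hk γ hγ0 hγ1 A B hA hB X Y D D' 𝒜 ℬ hbdA hbdB happroxA happroxB ε δ g h hg
    hh hε hδ AA BB hAA hBB
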